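/- If a, b, c, d are coprime integers such that (a^2, b^2, c^2, d^5) is an arithmetic progression, then there exist j ∈ {0, ±1, ±2} and integers u, v with v ≠ 0 or (u,v) = (±1, 0), such that a^2 = 2 g_j(u,v)^2 - h_j(u,v)^2, where g_j + h_j √2 = (1+√2)^j (u + v√2)^5 in Z[√2]; in particular, if v ≠ 0 then (u/v, a/v^5) is a rational point on the curve y^2 = 2 g_j(x,1)^2 - h_j(x,1)^2. -/

import Mathlib

/-!
Put `X = b + c√2`. Then `X * X̄ = b² - 2c² = (-d)⁵`, and `X`, `X̄` are coprime because `b` is odd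
and `gcd(b, c) = 1`. Since `ℤ[√2]` is Euclidean, `X` is a unit times a fifth power, and the units
are `±(1+√2)ⁿ`; writing `n = 5q + j` with `|j| ≤ 2` and absorbing `±(1+√2)^q` into the fifth
power gives `b + c√2 = (1+√2)^j (u + v√2)⁵`, so `a² = 2b² - c² = 2 g_j(u,v)² - h_j(u,v)²`.
If `v = 0`, then `u⁵` divides both `b` and `c`, so `u = ±1`.
-/

/-- The fundamental unit `1 + √2` of `ℤ[√2]`. -/
def sqrt2Unit : (Zsqrtd 2)ˣ :=
  ⟨⟨1, 1⟩, ⟨-1, 1⟩, by ext <;> simp [Zsqrtd.re_mul, Zsqrtd.im_mul],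
    by ext <;> simp [Zsqrtd.re_mul, Zsqrtd.im_mul]⟩

/-- `g_j(u,v)`, the rational part of `(1+√2)^j (u + v√2)⁵` in `ℤ[√2]`. -/
def gPart (j u v : ℤ) : ℤ :=
  ((↑(sqrt2Unit ^ j) : Zsqrtd 2) * (⟨u, v⟩ : Zsqrtd 2) ^ 5).re

/-- `h_j(u,v)`, the `√2`-part of `(1+√2)^j (u + v√2)⁵` in `ℤ[√2]`. -/
def hPart (j u v : ℤ) : ℤ :=
  ((↑(sqrt2Unit ^ j) : Zsqrtd 2) * (⟨u, v⟩ : Zsqrtd 2) ^ 5).im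

namespace Int

theorem odd_of_two_mul_sq_eq_sq_add_sq {a b c : ℤ} (hab : IsCoprime a b)
    (h : 2 * b ^ 2 = a ^ 2 + c ^ 2) : Odd b := by
  by_contra hb
  obtain ⟨k, rfl⟩ := Int.not_odd_iff_even.mp hb
  obtain ⟨m, rfl⟩ : Odd a :=
    isCoprime_two_left.mp (hab.of_isCoprime_of_dvd_right ⟨k, by ring⟩).symm
  rcases c.even_or_odd' with ⟨n, rfl | rfl⟩ <;> ring_nf at h <;> omega

theorem isCoprime_of_two_mul_sq_eq_sq_add_sq {a b c : ℤ} (hab : IsCoprime a b)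
    (h : 2 * b ^ 2 = a ^ 2 + c ^ 2) : IsCoprime b c := by
  have hc : c ^ 2 = -a ^ 2 + b * (2 * b) := by linear_combination -h
  rw [← IsCoprime.pow_right_iff two_pos, hc, IsCoprime.add_mul_left_right_iff]
  exact hab.symm.pow_right.neg_right

theorem isCoprime_sq_sub_two_mul_sq_two_mul {b c : ℤ} (hb : Odd b) (hbc : IsCoprime b c) :
    IsCoprime (b ^ 2 - 2 * c ^ 2) (2 * b) := by
  refine IsCoprime.mul_right ?_ ?_
  · exact isCoprime_two_right.mpr (hb.pow.sub_even (even_two_mul _))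
  · rw [show b ^ 2 - 2 * c ^ 2 = -(2 * c ^ 2) + b * b by ring, IsCoprime.add_mul_right_left_iff]
    exact ((isCoprime_two_left.mpr hb).mul_left hbc.symm.pow_left).neg_left

theorem abs_two_mul_sub_mul_round_div_le (z : ℤ) {n : ℤ} (hn : n ≠ 0) :
    |2 * (z - n * round ((z : ℚ) / n))| ≤ |n| := by
  have hnq : (n : ℚ) ≠ 0 := Int.cast_ne_zero.mpr hn
  have key : |2 * ((z : ℚ) - n * round ((z : ℚ) / n))| ≤ |(n : ℚ)| :=
    calc |2 * ((z : ℚ) - n * round ((z : ℚ) / n))|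
        = |2 * n * ((z : ℚ) / n - round ((z : ℚ) / n))| := by congr 1; field_simp
      _ = 2 * |(n : ℚ)| * |(z : ℚ) / n - round ((z : ℚ) / n)| := by
          rw [abs_mul, abs_mul, abs_two]
      _ ≤ 2 * |(n : ℚ)| * (1 / 2) := by gcongr; exact abs_sub_round _
      _ = |(n : ℚ)| := by ring
  exact_mod_cast key

theorem two_ne_mul_self (n : ℤ) : 2 ≠ n * n := fun h => prime_two.not_isSquare ⟨n, h⟩

end Int

theorem Pell.isFundamental_three_two :
    Pell.IsFundamental (Pell.Solution₁.mk (d := 2) 3 2 (by norm_num)) := by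
  refine ⟨by simp, by simp, fun {b} hb => ?_⟩
  by_contra! h
  have hb := b.prop
  rw [show b.x = 2 by simp at h; omega] at hb
  omega

namespace Zsqrtd

variable {d : ℤ}

/-- The lattice point nearest to `x / y = x * star y / y.norm`; `roundDiv x 0 = 0`, since
division by `0` in `ℚ` gives `0`. -/
def roundDiv (x y : ℤ√d) : ℤ√d :=
  ⟨round (((x * star y).re : ℚ) / y.norm), round (((x * star y).im : ℚ) / y.norm)⟩

theorem natAbs_norm_sub_mul_roundDiv_lt (hd₀ : -3 < d) (hd₁ : d < 4) (x : ℤ√d) {y : ℤ√d}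
    (hy : y.norm ≠ 0) : (x - y * roundDiv x y).norm.natAbs < y.norm.natAbs := by
  set n := y.norm
  set z := x * star y
  set q := roundDiv x y
  set e₁ := z.re - n * q.re
  set e₂ := z.im - n * q.im
  have hstar : star y * (x - y * q) = z - n * q := by
    rw [mul_sub, ← mul_assoc, mul_comm (star y) y, ← norm_eq_mul_conj, mul_comm]
  have hnorm : n * (x - y * q).norm = e₁ * e₁ - d * e₂ * e₂ := by
    have := congrArg norm hstar
    rw [norm_mul, norm_conj] at this
    rw [this, norm_def]
    simp [e₁, e₂]
  have he₁ : (2 * e₁) ^ 2 ≤ n ^ 2 := sq_le_sq.mpr (Int.abs_two_mul_sub_mul_round_div_le _ hy)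
  have he₂ : (2 * e₂) ^ 2 ≤ n ^ 2 := sq_le_sq.mpr (Int.abs_two_mul_sub_mul_round_div_le _ hy)
  -- `4n · N(x - y q) = (2e₁)² - d (2e₂)²`, both squares `≤ n²`: less than `4n²` in absolute value
  -- because `-3 < d < 4`.
  have hn : 0 < n ^ 2 := by positivity
  have h₁ := mul_nonneg (by omega : (0 : ℤ) ≤ d + 2) (sq_nonneg (2 * e₂))
  have h₂ := mul_nonneg (by omega : (0 : ℤ) ≤ 3 - d) (sq_nonneg (2 * e₂))
  rw [Int.natAbs_lt_iff_sq_lt]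
  nlinarith

instance : EuclideanDomain (ℤ√2) :=
  { Zsqrtd.commRing, (inferInstance : Nontrivial (ℤ√2)) with
    quotient := roundDiv
    remainder := fun x y => x - y * roundDiv x y
    quotient_zero := fun x => by ext <;> simp [roundDiv]
    quotient_mul_add_remainder_eq := fun x y => add_sub_cancel _ _
    r := _
    r_wellFounded := (measure (Int.natAbs ∘ norm)).wf
    remainder_lt := fun x y hy => natAbs_norm_sub_mul_roundDiv_lt (by norm_num) (by norm_num) x
      (mt (norm_eq_zero Int.two_ne_mul_self y).mp hy)
    mul_left_not_lt := fun x y hy => by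
      change ¬(x * y).norm.natAbs < x.norm.natAbs
      rw [norm_mul, Int.natAbs_mul, not_lt]
      exact Nat.le_mul_of_pos_right _
        (Int.natAbs_pos.mpr (mt (norm_eq_zero Int.two_ne_mul_self y).mp hy)) }

theorem isCoprime_star_of_isCoprime_norm_two_mul_re {x : ℤ√d}
    (h : IsCoprime x.norm (2 * x.re)) : IsCoprime x (star x) := by
  have h' := h.map (Int.castRingHom (ℤ√d))
  have hre : ((2 * x.re : ℤ) : ℤ√d) = star x + x * 1 := by ext <;> simp; ring
  rw [eq_intCast, eq_intCast, norm_eq_mul_conj, hre] at h'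
  exact IsCoprime.add_mul_left_right_iff.mp h'.of_mul_left_left

theorem isUnit_of_eq_mul_intCast_pow {x u : ℤ√d} {m : ℤ} {k : ℕ} (hk : k ≠ 0)
    (hx : IsCoprime x.re x.im) (h : x = u * (m : ℤ√d) ^ k) : IsUnit m := by
  have hm : (m : ℤ√d) ∣ x := h ▸ dvd_mul_of_dvd_right (dvd_pow_self _ hk) u
  rw [intCast_dvd] at hm
  exact hx.isUnit_of_dvd' hm.1 hm.2

theorem eq_sqrt2Unit_zpow_two_mul_or_neg_of_norm_eq_one {u : (ℤ√2)ˣ}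
    (hu : (u : ℤ√2).norm = 1) :
    ∃ n : ℤ, u = sqrt2Unit ^ (2 * n) ∨ u = -sqrt2Unit ^ (2 * n) := by
  let toUnits : Pell.Solution₁ 2 →* (ℤ√2)ˣ := Unitary.toUnits
  obtain ⟨n, hn⟩ :=
    Pell.isFundamental_three_two.eq_zpow_or_neg_zpow ⟨u, norm_eq_one_iff_mem_unitary.mp hu⟩
  have hfund : toUnits (Pell.Solution₁.mk 3 2 (by norm_num)) = sqrt2Unit ^ 2 := by
    ext : 1; decide
  have hpow (m : ℤ) :
      toUnits (Pell.Solution₁.mk 3 2 (by norm_num) ^ m) = sqrt2Unit ^ (2 * m) := by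
    rw [map_zpow, hfund, ← zpow_natCast, ← zpow_mul, Nat.cast_ofNat]
  have hneg (a : Pell.Solution₁ 2) : toUnits (-a) = -toUnits a := Units.ext rfl
  have hu' : u = toUnits ⟨u, norm_eq_one_iff_mem_unitary.mp hu⟩ := Units.ext rfl
  refine ⟨n, hn.imp (fun h => ?_) (fun h => ?_)⟩
  · rw [hu', h, hpow]
  · rw [hu', h, hneg, hpow]

theorem eq_sqrt2Unit_zpow_or_neg (u : (ℤ√2)ˣ) :
    ∃ n : ℤ, u = sqrt2Unit ^ n ∨ u = -sqrt2Unit ^ n := by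
  rcases Int.natAbs_eq_iff.mp (norm_eq_one_iff.mpr u.isUnit) with hu | hu
  · obtain ⟨n, hn⟩ := eq_sqrt2Unit_zpow_two_mul_or_neg_of_norm_eq_one hu
    exact ⟨2 * n, hn⟩
  · have hε : ((u * sqrt2Unit : (ℤ√2)ˣ) : ℤ√2).norm = 1 := by
      rw [Units.val_mul, norm_mul, hu]; rfl
    obtain ⟨n, hn⟩ := eq_sqrt2Unit_zpow_two_mul_or_neg_of_norm_eq_one hε
    refine ⟨2 * n - 1, hn.imp (fun h => ?_) (fun h => ?_)⟩
    · rw [zpow_sub_one, ← h, mul_inv_cancel_right]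
    · rw [zpow_sub_one, ← neg_mul, ← h, mul_inv_cancel_right]

theorem exists_eq_sqrt2Unit_zpow_mul_pow (u : (ℤ√2)ˣ) {k : ℕ} (hk : Odd k) :
    ∃ j : ℤ, -(k : ℤ) < 2 * j ∧ 2 * j < k ∧ ∃ v : (ℤ√2)ˣ, u = sqrt2Unit ^ j * v ^ k := by
  obtain ⟨n, hn⟩ := eq_sqrt2Unit_zpow_or_neg u
  obtain ⟨t, rfl⟩ := hk
  set m := n + t with hm
  have hk₀ : (0 : ℤ) < 2 * t + 1 := by omega
  have := Int.emod_nonneg m hk₀.ne'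
  have := Int.emod_lt_of_pos m hk₀
  have := Int.mul_ediv_add_emod m (2 * t + 1)
  refine ⟨m % (2 * t + 1) - t, by push_cast; omega, by push_cast; omega, ?_⟩
  have hsplit : sqrt2Unit ^ n =
      sqrt2Unit ^ (m % (2 * t + 1) - t) * (sqrt2Unit ^ (m / (2 * t + 1))) ^ (2 * t + 1) := by
    rw [← zpow_natCast, ← zpow_mul, ← zpow_add]
    congr 1
    push_cast
    linear_combination -this - hm
  rcases hn with rfl | rfl
  · exact ⟨_, hsplit⟩
  · exact ⟨-sqrt2Unit ^ (m / (2 * t + 1)),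
      by rw [(odd_two_mul_add_one t).neg_pow, hsplit, mul_neg]⟩

theorem exists_eq_sqrt2Unit_zpow_mul_pow_of_mul_star_eq_pow {x y : ℤ√2} {k : ℕ} (hk : Odd k)
    (hx : IsCoprime x (star x)) (h : x * star x = y ^ k) :
    ∃ j : ℤ, -(k : ℤ) < 2 * j ∧ 2 * j < k ∧ ∃ w : ℤ√2, x = ↑(sqrt2Unit ^ j) * w ^ k := by
  obtain ⟨w, u, rfl⟩ := exists_associated_pow_of_mul_eq_pow' hx h
  obtain ⟨j, hj₁, hj₂, v, rfl⟩ := exists_eq_sqrt2Unit_zpow_mul_pow u hk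
  exact ⟨j, hj₁, hj₂, v * w, by push_cast; ring⟩

end Zsqrtd

/-- If `(a², b², c², d⁵)` is an arithmetic progression in coprime integers,
then `a² = 2 g_j(u,v)² - h_j(u,v)²` for some `j ∈ {0, ±1, ±2}` and integers
`u, v` with `v ≠ 0` or `(u,v) = (±1, 0)`; in particular, if `v ≠ 0` then
`(u/v, a/v⁵)` is a rational point on `y² = f_j(x)`, where by homogeneity
`f_j(u/v) = (2 g_j(u,v)² - h_j(u,v)²)/v¹⁰`. -/
theorem progression_gives_point_on_curve (a b c d : ℤ)
    (hcop : Int.gcd a b = 1)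
    (h1 : 2 * b ^ 2 = a ^ 2 + c ^ 2) (h2 : 2 * c ^ 2 = b ^ 2 + d ^ 5) :
    ∃ j : ℤ, -2 ≤ j ∧ j ≤ 2 ∧ ∃ u v : ℤ,
      (v ≠ 0 ∨ ((u = 1 ∨ u = -1) ∧ v = 0)) ∧
      a ^ 2 = 2 * gPart j u v ^ 2 - hPart j u v ^ 2 ∧
      (v ≠ 0 → ((a : ℚ) / (v : ℚ) ^ 5) ^ 2 =
        (2 * (gPart j u v : ℚ) ^ 2 - (hPart j u v : ℚ) ^ 2) / (v : ℚ) ^ 10) := by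
  have hab : IsCoprime a b := Int.isCoprime_iff_gcd_eq_one.mpr hcop
  have hbc : IsCoprime b c := Int.isCoprime_of_two_mul_sq_eq_sq_add_sq hab h1
  set X : ℤ√2 := ⟨b, c⟩
  have hX : IsCoprime X (star X) := Zsqrtd.isCoprime_star_of_isCoprime_norm_two_mul_re <| by
    simpa [Zsqrtd.norm_def, X, sq, mul_assoc] using
      Int.isCoprime_sq_sub_two_mul_sq_two_mul (Int.odd_of_two_mul_sq_eq_sq_add_sq hab h1) hbc
  have hXX : X * star X = ((-d : ℤ) : ℤ√2) ^ 5 := by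
    rw [← Zsqrtd.norm_eq_mul_conj, ← Int.cast_pow, Zsqrtd.norm_def]
    congr 1
    linear_combination -h2
  obtain ⟨j, hj₁, hj₂, W, hW⟩ :=
    Zsqrtd.exists_eq_sqrt2Unit_zpow_mul_pow_of_mul_star_eq_pow (by decide) hX hXX
  have ha : a ^ 2 = 2 * gPart j W.re W.im ^ 2 - hPart j W.re W.im ^ 2 := by
    rw [gPart, hPart, ← hW]
    linear_combination -h1
  refine ⟨j, by omega, by omega, W.re, W.im, or_iff_not_imp_left.mpr fun hv => ?_, ha, fun _ => ?_⟩
  · have hW' : X = ↑(sqrt2Unit ^ j) * ((W.re : ℤ) : ℤ√2) ^ 5 := by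
      rw [hW]; congr; ext <;> simp [not_not.mp hv]
    exact ⟨Int.isUnit_iff.mp (Zsqrtd.isUnit_of_eq_mul_intCast_pow (by norm_num) hbc hW'),
      not_not.mp hv⟩
  · rw [div_pow, ← pow_mul]
    congr 1
    exact_mod_cast ha
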